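/- Let G be a finite directed graph (loops and multiple edges allowed) with n vertices and adjacency matrix A, and let P_G(λ) = λ^n + c_1 λ^{n-1} + ⋯ + c_n be its characteristic polynomial. Then for each i = 1,…,n, c_i = Σ_{L ∈ 𝓛_i} (−1)^{p(L)}, where 𝓛_i is the set of all linear directed subgraphs L of G with exactly i vertices and p(L) denotes the number of connected components of L. -/

import Mathlib

/-!
The characteristic polynomial is the signed sum of principal minors,
`c_i = (-1)^i ∑_{|S| = i} det A[S]`, and the Leibniz expansion of a principal minor runs over
the permutations `σ` of `S`, that is over the linear subgraphs on `S` (with multiplicities).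
Since `sign σ = (-1)^(|S| - #cycles σ)`, the sign `(-1)^i sign σ` is `(-1)^(#cycles σ)`.
-/

open Finset Equiv

/-- The number of cycles of a permutation, counting fixed points as 1-cycles. -/
def cyclesCount {α : Type*} [Fintype α] [DecidableEq α] (σ : Equiv.Perm α) : ℕ :=
  (Fintype.card α - σ.cycleType.sum) + σ.cycleType.card

theorem Equiv.Perm.neg_one_pow_card_mul_sign {α : Type*} [Fintype α] [DecidableEq α]
    (σ : Perm α) : (-1 : ℤˣ) ^ Fintype.card α * Perm.sign σ = (-1) ^ cyclesCount σ := by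
  have hsum : σ.cycleType.sum ≤ Fintype.card α := by
    rw [Perm.sum_cycleType]
    exact card_le_univ _
  obtain ⟨m, hm⟩ := Nat.exists_eq_add_of_le hsum
  rw [Perm.sign_of_cycleType, cyclesCount, hm, Nat.add_sub_cancel_left, ← pow_add]
  rw [show σ.cycleType.sum + m + (σ.cycleType.sum + Multiset.card σ.cycleType) =
      m + Multiset.card σ.cycleType + 2 * σ.cycleType.sum by ring, pow_add, pow_mul]
  simp

theorem Matrix.neg_one_pow_card_mul_det_eq_sum_cyclesCount {n R : Type*} [Fintype n]
    [DecidableEq n] [CommRing R] (M : Matrix n n R) :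
    (-1) ^ Fintype.card n * M.det =
      ∑ σ : Perm n, (-1) ^ cyclesCount σ * ∏ x, M x (σ x) := by
  rw [← M.det_transpose, Matrix.det_apply', mul_sum]
  refine sum_congr rfl fun σ _ => ?_
  have hsign := congrArg (fun u : ℤˣ => ((u : ℤ) : R)) σ.neg_one_pow_card_mul_sign
  push_cast at hsign
  rw [← mul_assoc, ← hsign]
  rfl

theorem Matrix.charpoly_coeff_eq_sum_cyclesCount {n R : Type*} [Fintype n] [DecidableEq n]
    [CommRing R] (M : Matrix n n R) {k : ℕ} (hk : k ≤ Fintype.card n) :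
    M.charpoly.coeff (Fintype.card n - k) =
      ∑ S ∈ univ.filter (fun S : Finset n => S.card = k), ∑ σ : Perm S,
        (-1) ^ cyclesCount σ * ∏ x : S, M x (σ x) := by
  rw [M.charpoly_coeff_eq_sum_minors k hk, powersetCard_eq_filter, powerset_univ, mul_sum]
  refine sum_congr rfl fun S hS => ?_
  rw [← (mem_filter.mp hS).2, ← Fintype.card_coe S, neg_one_pow_card_mul_det_eq_sum_cyclesCount]
  rfl

/-- A linear subgraph on the vertex set `S` is a permutation `σ` of `S` together with a choice
of one of the `A v (σ v)` parallel edges at each `v ∈ S`; the product of multiplicities counts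
these choices. -/
theorem stmt0_general {V : Type*} [Fintype V] [DecidableEq V] (A : V → V → ℕ)
    (i : ℕ) (hin : i ≤ Fintype.card V) :
    (Matrix.charpoly (Matrix.of fun a b => (A a b : ℤ))).coeff (Fintype.card V - i) =
      ∑ S ∈ Finset.univ.filter (fun S : Finset V => S.card = i),
        ∑ σ : Equiv.Perm {x : V // x ∈ S},
          (-1 : ℤ) ^ cyclesCount σ * ∏ x : {x : V // x ∈ S}, (A x.1 (σ x).1 : ℤ) :=
  Matrix.charpoly_coeff_eq_sum_cyclesCount _ hin

/-- Coefficient theorem for digraphs: in the characteristic polynomial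
`P_G(λ) = λ^n + c_1 λ^{n-1} + ⋯ + c_n` of the adjacency matrix `A` of a digraph `G`
(with multiplicities `A i j`), the coefficient `c_i` equals
`Σ_{L ∈ 𝓛_i} (−1)^{p(L)}`, the sum over all linear directed subgraphs `L` of `G`
with exactly `i` vertices (a linear subgraph is given by a vertex set `S`, a
permutation `σ` of `S`, and a choice of one of the `A v (σ v)` parallel edges
at each `v ∈ S`, accounted for by the product of multiplicities), with
`p(L)` the number of components of `L`. -/
theorem stmt0 {V : Type*} [Fintype V] [DecidableEq V] (A : V → V → ℕ)
    (i : ℕ) (hi : 1 ≤ i) (hin : i ≤ Fintype.card V) :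
    (Matrix.charpoly (Matrix.of fun a b => (A a b : ℤ))).coeff (Fintype.card V - i) =
      ∑ S ∈ Finset.univ.filter (fun S : Finset V => S.card = i),
        ∑ σ : Equiv.Perm {x : V // x ∈ S},
          (-1 : ℤ) ^ cyclesCount σ * ∏ x : {x : V // x ∈ S}, (A x.1 (σ x).1 : ℤ) :=
  stmt0_general A i hin
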